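/- Let f = (f_1, …, f_n) be a Boolean monomial fixed point system with dependency graph 𝒳, and let i, j be vertices of 𝒳. Suppose that at least one of the following holds: there is no walk from i to j in 𝒳; there is a closed walk of length ≥ 1 at i; or there is a closed walk of length ≥ 1 at j. Then the Boolean monomial system g := (f_1, …, f_{j-1}, x_i · f_j, f_{j+1}, …, f_n) is a fixed point system. -/
import Mathlib


/-- `hasWalk E m a b` means there is a walk of length `m` from `a` to `b`
in the directed graph with edge relation `E` (walks of length 0 allowed). -/
def hasWalk {V : Type*} (E : V → V → Prop) : ℕ → V → V → Prop
  | 0 => fun a b => a = b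
  | m + 1 => fun a b => ∃ c, E a c ∧ hasWalk E m c b

/-- A directed graph is strongly connected if there is a walk between any
two vertices. -/
def StronglyConnected {V : Type*} (E : V → V → Prop) : Prop :=
  ∀ a b : V, ∃ m, hasWalk E m a b

/-- The loop number at a vertex `a`: the minimum `t ≥ 1` arising as the
difference of lengths of two closed walks at `a`, and `0` if there is no
closed walk of length `≥ 1` at `a` (so no such difference exists). -/
noncomputable def loopNumAt {V : Type*} (E : V → V → Prop) (a : V) : ℕ :=
  sInf {t | 1 ≤ t ∧ ∃ p q, hasWalk E p a a ∧ hasWalk E q a a ∧ p = q + t}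

/-- Evaluation of a monomial coordinate function: `none` is the constant 0,
`some S` is the square-free monomial `∏ j ∈ S, x j` (empty product = 1). -/
def monEval {ι : Type*} (c : Option (Finset ι)) (x : ι → ZMod 2) : ZMod 2 :=
  match c with
  | none => 0
  | some S => ∏ j ∈ S, x j

/-- The Boolean monomial system determined by the coordinate data `M`. -/
def sysEval {ι : Type*} (M : ι → Option (Finset ι)) (x : ι → ZMod 2) : ι → ZMod 2 :=
  fun i => monEval (M i) x

/-- Edge relation of the dependency graph of a Boolean monomial system:
`i → j` iff `f i ≠ 0` and `x j` is a factor of `f i`. -/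
def depEdge {ι : Type*} (M : ι → Option (Finset ι)) (i j : ι) : Prop :=
  ∃ S, M i = some S ∧ j ∈ S

/-- A map is a fixed point system if every trajectory reaches a fixed point. -/
def FixedPointSystem {α : Type*} (F : α → α) : Prop :=
  ∀ a, ∃ m, F^[m + 1] a = F^[m] a

/-- A glueing of the Boolean monomial system `M₂` (in variables `y`) to the
Boolean monomial system `M₁` (in variables `x`): the `x`-coordinates are
those of `M₁`, and the `i`-th `y`-coordinate is `g i` multiplied by the
monomial in the `x`-variables given by `T i` (and is `0` when `g i = 0`). -/
def glue {r s : ℕ} (M₁ : Fin r → Option (Finset (Fin r)))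
    (M₂ : Fin s → Option (Finset (Fin s))) (T : Fin s → Finset (Fin r)) :
    (Fin r ⊕ Fin s) → Option (Finset (Fin r ⊕ Fin s))
  | .inl i => (M₁ i).map (Finset.image Sum.inl)
  | .inr i => (M₂ i).map (fun S => S.image Sum.inr ∪ (T i).image Sum.inl)

theorem hasWalk_congr {V : Type*} {E : V → V → Prop} {m m' : ℕ} {a b : V}
    (h : m = m') (hw : hasWalk E m a b) : hasWalk E m' a b := h ▸ hw

theorem hasWalk_zero {V : Type*} {E : V → V → Prop} (a : V) : hasWalk E 0 a a := rfl

theorem hasWalk_cons {V : Type*} {E : V → V → Prop} {m : ℕ} {a c b : V}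
    (he : E a c) (hw : hasWalk E m c b) : hasWalk E (m + 1) a b := ⟨c, he, hw⟩

theorem hasWalk_trans {V : Type*} {E : V → V → Prop} :
    ∀ (m m' : ℕ) (a b c : V), hasWalk E m a b → hasWalk E m' b c →
      hasWalk E (m + m') a c := by
  intro m
  induction m with
  | zero =>
    intro m' a b c h1 h2
    have hab : a = b := h1
    subst hab
    exact hasWalk_congr (by omega) h2
  | succ k ih =>
    intro m' a b c h1 h2
    obtain ⟨d, he, hw⟩ := h1
    exact hasWalk_congr (by omega) (hasWalk_cons he (ih m' d b c hw h2))

theorem hasWalk_single {V : Type*} {E : V → V → Prop} {a b : V} (h : E a b) :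
    hasWalk E 1 a b := ⟨b, h, rfl⟩

theorem hasWalk_mul {V : Type*} {E : V → V → Prop} {m : ℕ} {v : V}
    (h : hasWalk E m v v) : ∀ q, hasWalk E (q * m) v v := by
  intro q
  induction q with
  | zero => exact hasWalk_congr (by ring) (hasWalk_zero v)
  | succ k ih => exact hasWalk_congr (by ring) (hasWalk_trans _ _ _ _ _ ih h)

/-- `v` can reach a constant-zero coordinate. -/
def reach0 {ι : Type*} (M : ι → Option (Finset ι)) (v : ι) : Prop :=
  ∃ m w, hasWalk (depEdge M) m v w ∧ M w = none

theorem reach0_of_edge {ι : Type*} {M : ι → Option (Finset ι)} {u c : ι}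
    (he : depEdge M u c) (h : reach0 M c) : reach0 M u := by
  obtain ⟨m, w, hw, hn⟩ := h
  exact ⟨m + 1, w, hasWalk_cons he hw, hn⟩

theorem necc {n : ℕ} (M : Fin n → Option (Finset (Fin n)))
    (hf : FixedPointSystem (sysEval M)) (v : Fin n) (hv : ¬ reach0 M v)
    (hc : ∃ ℓ, 1 ≤ ℓ ∧ hasWalk (depEdge M) ℓ v v) :
    ∃ q, hasWalk (depEdge M) (q + 1) v v ∧ hasWalk (depEdge M) q v v := by
  classical
  by_contra hq
  push_neg at hq
  obtain ⟨ℓ, hℓ, hwℓ⟩ := hc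
  set D := {k | 0 < k ∧ ∃ a b, hasWalk (depEdge M) a v v ∧ hasWalk (depEdge M) b v v ∧
    a = b + k} with hD
  have hmemD : ℓ ∈ D := ⟨hℓ, ℓ, 0, hwℓ, hasWalk_zero v, by omega⟩
  set d := sInf D with hdd
  have hdD : d ∈ D := Nat.sInf_mem ⟨ℓ, hmemD⟩
  obtain ⟨hd0, c, e, hwc, hwe, hce⟩ := hdD
  have hd1 : d ≠ 1 := by
    intro h1
    exact hq e (hasWalk_congr (by omega) hwc) hwe
  have hd2 : 2 ≤ d := by omega
  have ddvd : ∀ m, hasWalk (depEdge M) m v v → d ∣ m := by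
    intro m hm
    by_contra hnd
    have hr0 : m % d ≠ 0 := fun hh => hnd (Nat.dvd_of_mod_eq_zero hh)
    have hmod := Nat.div_add_mod m d
    have hmd : m % d < d := Nat.mod_lt _ (by omega)
    have hA : hasWalk (depEdge M) (m + (m / d) * e) v v :=
      hasWalk_trans _ _ _ _ _ hm (hasWalk_mul hwe (m / d))
    have hB : hasWalk (depEdge M) ((m / d) * c) v v := hasWalk_mul hwc (m / d)
    have hc' : (m / d) * c = (m / d) * e + (m / d) * d := by rw [hce, Nat.mul_add]
    have hcomm : (m / d) * d = d * (m / d) := Nat.mul_comm _ _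
    have hmem : m % d ∈ D := ⟨by omega, m + (m / d) * e, (m / d) * c, hA, hB, by omega⟩
    have := Nat.sInf_le hmem
    omega
  have hdvdℓ := ddvd ℓ hwℓ
  -- the non-fixed periodic orbit
  set x : ℕ → Fin n → ZMod 2 := fun t u =>
    if (reach0 M u ∨ ∃ m, hasWalk (depEdge M) m u v ∧ m % d = t % d) then 0 else 1 with hx
  have hstep : ∀ t, sysEval M (x t) = x (t + 1) := by
    intro t
    funext u
    show monEval (M u) (x t) = x (t + 1) u
    by_cases hcnd : reach0 M u ∨ ∃ m, hasWalk (depEdge M) m u v ∧ m % d = (t + 1) % d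
    · have hx1 : x (t + 1) u = 0 := if_pos hcnd
      rw [hx1]
      rcases hMu : M u with _ | S
      · simp [monEval]
      · show (∏ w ∈ S, x t w) = 0
        rcases hcnd with hr | ⟨m, hw, hm⟩
        · obtain ⟨m, w0, hw, h0⟩ := hr
          match m, hw with
          | 0, hw =>
            have : u = w0 := hw
            rw [this, h0] at hMu
            cases hMu
          | (m + 1), hw =>
            obtain ⟨c1, ⟨S', hS', hc1⟩, hw'⟩ := hw
            rw [hMu] at hS'
            have hSS : S' = S := by injection hS' with h'; exact h'.symm
            subst hSS
            refine Finset.prod_eq_zero hc1 ?_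
            exact if_pos (Or.inl ⟨m, w0, hw', h0⟩)
        · match m, hw, hm with
          | 0, hw, hm =>
            have huv : u = v := hw
            subst huv
            obtain ⟨ℓ', rfl⟩ : ∃ ℓ', ℓ = ℓ' + 1 := ⟨ℓ - 1, by omega⟩
            obtain ⟨c1, ⟨S', hS', hc1⟩, hw'⟩ := hwℓ
            rw [hMu] at hS'
            have hSS : S' = S := by injection hS' with h'; exact h'.symm
            subst hSS
            refine Finset.prod_eq_zero hc1 ?_
            refine if_pos (Or.inr ⟨ℓ', hw', ?_⟩)
            -- ℓ' % d = t % d  from  (ℓ'+1) % d = 0, 0 % d = (t+1) % d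
            have h1 : (ℓ' + 1) % d = 0 := Nat.mod_eq_zero_of_dvd hdvdℓ
            have h2 : (ℓ' + 1) % d = (t + 1) % d := by
              rw [h1, ← hm, Nat.zero_mod]
            exact Nat.ModEq.add_right_cancel' 1 h2
          | (m + 1), hw, hm =>
            obtain ⟨c1, ⟨S', hS', hc1⟩, hw'⟩ := hw
            rw [hMu] at hS'
            have hSS : S' = S := by injection hS' with h'; exact h'.symm
            subst hSS
            refine Finset.prod_eq_zero hc1 ?_
            exact if_pos (Or.inr ⟨m, hw', Nat.ModEq.add_right_cancel' 1 hm⟩)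
    · have hx1 : x (t + 1) u = 1 := if_neg hcnd
      rw [hx1]
      rcases hMu : M u with _ | S
      · exact absurd (Or.inl ⟨0, u, hasWalk_zero u, hMu⟩) hcnd
      · show (∏ w ∈ S, x t w) = 1
        refine Finset.prod_eq_one ?_
        intro w hwS
        refine if_neg ?_
        rintro (hr | ⟨m, hw, hm⟩)
        · exact hcnd (Or.inl (reach0_of_edge ⟨S, hMu, hwS⟩ hr))
        · exact hcnd (Or.inr ⟨m + 1, hasWalk_cons ⟨S, hMu, hwS⟩ hw,
            Nat.ModEq.add_right 1 hm⟩)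
  have hiter : ∀ t, (sysEval M)^[t] (x 0) = x t := by
    intro t
    induction t with
    | zero => rfl
    | succ k ih => rw [Function.iterate_succ_apply', ih, hstep]
  have hper : ∀ t, x (t + d) = x t := by
    intro t
    funext u
    show (if _ then (0:ZMod 2) else 1) = (if _ then (0:ZMod 2) else 1)
    have : ∀ m : ℕ, (m % d = (t + d) % d) = (m % d = t % d) := by
      intro m; rw [Nat.add_mod_right]
    simp only [this]
  have hmulper : ∀ k t, x (t + k * d) = x t := by
    intro k
    induction k with
    | zero => intro t; simp
    | succ k ih =>
      intro t
      have h1 : t + (k + 1) * d = (t + k * d) + d := by ring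
      rw [h1, hper, ih]
  have hx0v : x 0 v = 0 := if_pos (Or.inr ⟨0, hasWalk_zero v, rfl⟩)
  have hx1v : x 1 v = 1 := by
    refine if_neg ?_
    rintro (hr | ⟨m, hw, hm⟩)
    · exact hv hr
    · have h1 : m % d = 0 := Nat.mod_eq_zero_of_dvd (ddvd m hw)
      have h2 : (1 : ℕ) % d = 1 := Nat.mod_eq_of_lt (by omega)
      omega
  obtain ⟨m, hm⟩ := hf (x 0)
  have stab : ∀ k, (sysEval M)^[m + k] (x 0) = (sysEval M)^[m] (x 0) := by
    intro k
    induction k with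
    | zero => rfl
    | succ k ih =>
      have h1 : m + (k + 1) = (m + k) + 1 := rfl
      rw [h1, Function.iterate_succ_apply', ih]
      exact (Function.iterate_succ_apply' (sysEval M) m (x 0)).symm.trans hm
  have hge : m + 1 ≤ (m + 1) * d := Nat.le_mul_of_pos_right _ (by omega)
  have e0 : (sysEval M)^[(m + 1) * d] (x 0) = x 0 := by
    rw [hiter]
    have := hmulper (m + 1) 0
    simpa using this
  have e1 : (sysEval M)^[(m + 1) * d + 1] (x 0) = x 1 := by
    rw [hiter]
    have := hmulper (m + 1) 1
    have h1 : (m + 1) * d + 1 = 1 + (m + 1) * d := by omega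
    rw [h1, this]
  have s0 := stab ((m + 1) * d - m)
  have s1 := stab ((m + 1) * d + 1 - m)
  rw [show m + ((m + 1) * d - m) = (m + 1) * d by omega] at s0
  rw [show m + ((m + 1) * d + 1 - m) = (m + 1) * d + 1 by omega] at s1
  have : x 0 = x 1 := by rw [← e0, ← e1, s0, s1]
  have hcontra := congrFun this v
  rw [hx0v, hx1v] at hcontra
  exact absurd hcontra (by decide)

/-- Representation by a numerical semigroup generated by q, q+1. -/
theorem repLem (q N : ℕ) (h : q * q ≤ N) : ∃ a b, N = a * q + b * (q + 1) := by
  rcases Nat.eq_zero_or_pos q with rfl | hq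
  · exact ⟨0, N, by omega⟩
  · have h1 : N % q < q := Nat.mod_lt _ hq
    have h2 : q * (N / q) + N % q = N := Nat.div_add_mod N q
    have h3 : q ≤ N / q := (Nat.le_div_iff_mul_le hq).mpr h
    refine ⟨N / q - N % q, N % q, ?_⟩
    have h4 : (N / q - N % q) * q = (N / q) * q - (N % q) * q := Nat.sub_mul _ _ _
    have h5 : (N % q) * q ≤ (N / q) * q := Nat.mul_le_mul_right _ (by omega)
    have h6 : (N / q) * q = q * (N / q) := Nat.mul_comm _ _
    have h7 : (N % q) * (q + 1) = (N % q) * q + N % q := by ring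
    omega

theorem periodic_fixed {n : ℕ} (M : Fin n → Option (Finset (Fin n)))
    (H : ∀ v, ¬ reach0 M v → (∃ ℓ, 1 ≤ ℓ ∧ hasWalk (depEdge M) ℓ v v) →
      ∃ q, hasWalk (depEdge M) (q + 1) v v ∧ hasWalk (depEdge M) q v v)
    (z : Fin n → ZMod 2) (p : ℕ) (hp : 1 ≤ p) (hz : (sysEval M)^[p] z = z) :
    sysEval M z = z := by
  classical
  set F := sysEval M with hF
  have valstep : ∀ (t : ℕ) (u : Fin n), F^[t + 1] z u = monEval (M u) (F^[t] z) := by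
    intro t u
    rw [Function.iterate_succ_apply']
    rfl
  have valper : ∀ (k t : ℕ), F^[t + k * p] z = F^[t] z := by
    intro k
    induction k with
    | zero => intro t; simp
    | succ k ih =>
      intro t
      have h1 : t + (k + 1) * p = (t + k * p) + p := by ring
      rw [h1, Function.iterate_add_apply, hz, ih]
  -- zeros propagate backward along walks
  have prop : ∀ (m : ℕ) (a b : Fin n), hasWalk (depEdge M) m a b →
      ∀ t, F^[t] z b = 0 → F^[t + m] z a = 0 := by
    intro m
    induction m with
    | zero =>
      intro a b h t h0
      have hab : a = b := h
      subst hab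
      exact h0
    | succ m ih =>
      intro a b h t h0
      obtain ⟨c, ⟨S, hS, hcS⟩, hw⟩ := h
      have h1 := ih c b hw t h0
      have h2 : F^[(t + m) + 1] z a = monEval (M a) (F^[t + m] z) := valstep _ _
      have h3 : t + (m + 1) = (t + m) + 1 := rfl
      rw [h3, h2, hS]
      exact Finset.prod_eq_zero hcS h1
  have zeroconst : ∀ (w : Fin n), M w = none → ∀ t, F^[t + 1] z w = 0 := by
    intro w hw t
    rw [valstep, hw]
    rfl
  have reach0zero : ∀ u, reach0 M u → ∀ t, F^[t] z u = 0 := by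
    intro u hu t
    obtain ⟨m, w, hw, hnone⟩ := hu
    have hle : m + 1 ≤ (m + 1) * p := Nat.le_mul_of_pos_right _ (by omega)
    set s := t + (m + 1) * p - (m + 1) with hs
    have h0 : F^[s + 1] z w = 0 := zeroconst w hnone s
    have h1 : F^[(s + 1) + m] z u = 0 := prop m u w hw (s + 1) h0
    have h2 : (s + 1) + m = t + (m + 1) * p := by omega
    rw [h2] at h1
    rw [← valper (m + 1) t]
    exact h1
  have back1 : ∀ (t : ℕ) (u : Fin n), ¬ reach0 M u → F^[t + 1] z u = 0 →
      ∃ c, depEdge M u c ∧ ¬ reach0 M c ∧ F^[t] z c = 0 := by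
    intro t u hnr h0
    rcases hMu : M u with _ | S
    · exact absurd ⟨0, u, hasWalk_zero u, hMu⟩ hnr
    · rw [valstep, hMu] at h0
      have h1 : ∃ c ∈ S, F^[t] z c = 0 := by
        by_contra hno
        push_neg at hno
        have : (∏ w ∈ S, F^[t] z w) ≠ 0 := Finset.prod_ne_zero_iff.mpr hno
        exact this h0
      obtain ⟨c, hcS, hc0⟩ := h1
      refine ⟨c, ⟨S, hMu, hcS⟩, ?_, hc0⟩
      intro hr
      exact hnr (reach0_of_edge ⟨S, hMu, hcS⟩ hr)
  have chainFun : ∀ (t L : ℕ) (u : Fin n), ¬ reach0 M u → F^[t + L] z u = 0 →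
      ∃ c : ℕ → Fin n, c 0 = u ∧ (∀ k, k < L → depEdge M (c k) (c (k + 1))) ∧
        (∀ k, k ≤ L → ¬ reach0 M (c k) ∧ F^[t + (L - k)] z (c k) = 0) := by
    intro t L
    induction L with
    | zero =>
      intro u hnr h0
      refine ⟨fun _ => u, rfl, fun k hk => absurd hk (by omega), ?_⟩
      intro k hk
      have : k = 0 := by omega
      subst this
      exact ⟨hnr, h0⟩
    | succ L ih =>
      intro u hnr h0
      have h0' : F^[(t + L) + 1] z u = 0 := by
        have : (t + L) + 1 = t + (L + 1) := by omega
        rw [this]; exact h0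
      obtain ⟨c1, he, hnr1, h1⟩ := back1 (t + L) u hnr h0'
      obtain ⟨c', hc0, hedge, hprop⟩ := ih c1 hnr1 h1
      refine ⟨fun k => match k with | 0 => u | (k + 1) => c' k, rfl, ?_, ?_⟩
      · intro k hk
        match k with
        | 0 =>
          show depEdge M u (c' 0)
          rw [hc0]; exact he
        | (k + 1) =>
          exact hedge k (by omega)
      · intro k hk
        match k with
        | 0 =>
          refine ⟨hnr, ?_⟩
          show F^[t + (L + 1 - 0)] z u = 0
          have : L + 1 - 0 = L + 1 := rfl
          rw [this]; exact h0
        | (k + 1) =>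
          have h2 := hprop k (by omega)
          have h3 : L + 1 - (k + 1) = L - k := by omega
          rw [h3]
          exact h2
  have walkAlong : ∀ (c : ℕ → Fin n) (L : ℕ),
      (∀ k, k < L → depEdge M (c k) (c (k + 1))) →
      ∀ (d : ℕ) (a : ℕ), a + d ≤ L → hasWalk (depEdge M) d (c a) (c (a + d)) := by
    intro c L hedge d
    induction d with
    | zero => intro a ha; exact hasWalk_zero (c a)
    | succ d ih =>
      intro a ha
      have h1 : hasWalk (depEdge M) d (c (a + 1)) (c ((a + 1) + d)) := ih (a + 1) (by omega)
      have h2 : (a + 1) + d = a + (d + 1) := by omega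
      rw [h2] at h1
      exact hasWalk_cons (hedge a (by omega)) h1
  have zforever : ∀ (w : Fin n) (q : ℕ), hasWalk (depEdge M) (q + 1) w w →
      hasWalk (depEdge M) q w w → ∀ s, F^[s] z w = 0 → ∀ t, F^[t] z w = 0 := by
    intro w q hq1 hq0 s hs t
    have step1 : ∀ a, F^[s + a * q] z w = 0 := by
      intro a
      induction a with
      | zero => simpa using hs
      | succ a ih =>
        have h1 : F^[(s + a * q) + q] z w = 0 := prop q w w hq0 _ ih
        have h2 : (s + a * q) + q = s + (a + 1) * q := by ring
        rw [h2] at h1; exact h1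
    have step2 : ∀ a b, F^[s + a * q + b * (q + 1)] z w = 0 := by
      intro a b
      induction b with
      | zero => simpa using step1 a
      | succ b ih =>
        have h1 : F^[(s + a * q + b * (q + 1)) + (q + 1)] z w = 0 := prop (q + 1) w w hq1 _ ih
        have h2 : (s + a * q + b * (q + 1)) + (q + 1) = s + a * q + (b + 1) * (q + 1) := by ring
        rw [h2] at h1; exact h1
    -- choose N ≡ t - s mod p with N ≥ q²
    set k := s + q * q + 1 with hk
    have hkp : k ≤ k * p := Nat.le_mul_of_pos_right _ (by omega)
    set N := t + k * p - s with hN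
    have hNq : q * q ≤ N := by omega
    obtain ⟨a, b, hab⟩ := repLem q N hNq
    have h1 : F^[s + N] z w = 0 := by
      have := step2 a b
      rw [show s + a * q + b * (q + 1) = s + N by omega] at this
      exact this
    have h2 : s + N = t + k * p := by omega
    rw [h2] at h1
    rw [← valper k t]
    exact h1
  -- zeros on the periodic orbit are constant in time
  have Kclaim : ∀ (u : Fin n) (t : ℕ), F^[t] z u = 0 → ∀ t', F^[t'] z u = 0 := by
    intro u t h0 t'
    by_cases hru : reach0 M u
    · exact reach0zero u hru t'
    · have hnpos : 0 < n := u.pos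
      have hnp : n ≤ n * p := Nat.le_mul_of_pos_right _ (by omega)
      have h1 : F^[(t + n * p - n) + n] z u = 0 := by
        rw [show (t + n * p - n) + n = t + n * p by omega, valper]
        exact h0
      obtain ⟨c, hc0, hedge, hprop⟩ := chainFun (t + n * p - n) n u hru h1
      -- pigeonhole on c over indices 0..n
      obtain ⟨k1', k2', hne, heq⟩ :=
        Fintype.exists_ne_map_eq_of_card_lt (fun k : Fin (n + 1) => c k.val) (by simp)
      obtain ⟨k1, k2, hlt, heq2⟩ : ∃ k1 k2 : ℕ, k1 < k2 ∧ k2 ≤ n ∧ c k1 = c k2 := by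
        rcases Nat.lt_or_ge k1'.val k2'.val with h | h
        · exact ⟨k1'.val, k2'.val, h, by omega, heq⟩
        · have h' : k2'.val < k1'.val := by
            rcases Nat.lt_or_ge k2'.val k1'.val with h2 | h2
            · exact h2
            · exact absurd (Fin.ext (by omega)) hne
          exact ⟨k2'.val, k1'.val, h', by omega, heq.symm⟩
      obtain ⟨hk2n, hceq⟩ := heq2
      set w := c k1 with hw
      have hwalk : hasWalk (depEdge M) (k2 - k1) w w := by
        have := walkAlong c n hedge (k2 - k1) k1 (by omega)
        rw [show k1 + (k2 - k1) = k2 by omega] at this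
        rw [← hceq] at this
        exact this
      have hwr := hprop k1 (by omega)
      obtain ⟨hwnr, hwz⟩ := hwr
      obtain ⟨q, hq1, hq0⟩ := H w hwnr ⟨k2 - k1, by omega, hwalk⟩
      have hwzero : ∀ t'', F^[t''] z w = 0 := zforever w q hq1 hq0 _ hwz
      -- propagate back to u
      have hwalku : hasWalk (depEdge M) k1 u w := by
        have := walkAlong c n hedge k1 0 (by omega)
        rw [hc0] at this
        have h2 : 0 + k1 = k1 := by omega
        rw [h2] at this
        exact this
      have hle : k1 + 1 ≤ (k1 + 1) * p := Nat.le_mul_of_pos_right _ (by omega)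
      set s' := t' + (k1 + 1) * p - k1 with hs'
      have h3 : F^[s' + k1] z u = 0 := prop k1 u w hwalku s' (hwzero s')
      rw [show s' + k1 = t' + (k1 + 1) * p by omega] at h3
      rw [← valper (k1 + 1) t']
      exact h3
  -- conclude
  funext u
  have h0 : F^[0] z u = z u := rfl
  have h1 : F^[1] z u = F z u := by rw [Function.iterate_one]
  have hcases : ∀ x : ZMod 2, x = 0 ∨ x = 1 := by decide
  show F z u = z u
  rcases hcases (F^[1] z u) with ha | ha
  · have := Kclaim u 1 ha 0
    rw [h0] at this
    rw [← h1, ha, this]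
  · rcases hcases (F^[0] z u) with hb | hb
    · have := Kclaim u 0 hb 1
      rw [ha] at this
      exact absurd this (by decide)
    · rw [← h1, ← h0, ha, hb]

theorem suff {n : ℕ} (M : Fin n → Option (Finset (Fin n)))
    (H : ∀ v, ¬ reach0 M v → (∃ ℓ, 1 ≤ ℓ ∧ hasWalk (depEdge M) ℓ v v) →
      ∃ q, hasWalk (depEdge M) (q + 1) v v ∧ hasWalk (depEdge M) q v v) :
    FixedPointSystem (sysEval M) := by
  intro a
  set F := sysEval M with hF
  have hfin : ∃ k l : ℕ, k < l ∧ F^[k] a = F^[l] a := by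
    obtain ⟨k, l, hne, heq⟩ := Finite.exists_ne_map_eq_of_infinite (fun m : ℕ => F^[m] a)
    rcases Nat.lt_or_ge k l with h | h
    · exact ⟨k, l, h, heq⟩
    · have h' : l < k := by
        rcases Nat.lt_or_ge l k with h2 | h2
        · exact h2
        · exact absurd (by omega : k = l) hne
      exact ⟨l, k, h', heq.symm⟩
  obtain ⟨k, l, hkl, heq⟩ := hfin
  have hz : F^[l - k] (F^[k] a) = F^[k] a := by
    rw [← Function.iterate_add_apply]
    rw [show l - k + k = l by omega]
    exact heq.symm
  have hfix := periodic_fixed M H (F^[k] a) (l - k) (by omega) hz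
  exact ⟨k, by rw [Function.iterate_succ_apply']; exact hfix⟩

/-- Let `f` be a Boolean monomial fixed point system with
dependency graph 𝒳 and let `i, j` be vertices. If there is no walk from `i`
to `j`, or there is a closed walk of length `≥ 1` at `i` or at `j`, then the
system obtained from `f` by multiplying the `j`-th coordinate by `x i` is a
fixed point system. -/
theorem statement18 {n : ℕ} (hn : 1 ≤ n) (M : Fin n → Option (Finset (Fin n)))
    (hf : FixedPointSystem (sysEval M)) (i j : Fin n)
    (hcond : (¬ ∃ ℓ, hasWalk (depEdge M) ℓ i j) ∨
      (∃ ℓ, 1 ≤ ℓ ∧ hasWalk (depEdge M) ℓ i i) ∨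
      (∃ ℓ, 1 ≤ ℓ ∧ hasWalk (depEdge M) ℓ j j)) :
    FixedPointSystem (sysEval (Function.update M j ((M j).map (insert i)))) := by
  classical
  rcases h : M j with _ | S
  · have hM' : Function.update M j (Option.map (insert i) none) = M := by
      funext x
      rcases eq_or_ne x j with rfl | hx
      · rw [Function.update_self, h]
        rfl
      · rw [Function.update_of_ne hx]
    rw [hM']
    exact hf
  · set M' := Function.update M j (Option.map (insert i) (some S)) with hM'def
    have hM'j : M' j = some (insert i S) := by
      rw [hM'def, Function.update_self]
      rfl
    have hM'ne : ∀ x, x ≠ j → M' x = M x := by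
      intro x hx
      rw [hM'def, Function.update_of_ne hx]
    have const0' : ∀ w, M w = none → M' w = none := by
      intro w hw
      have hwj : w ≠ j := by
        rintro rfl
        rw [h] at hw
        cases hw
      rw [hM'ne w hwj]
      exact hw
    have e_lift : ∀ a b, depEdge M a b → depEdge M' a b := by
      rintro a b ⟨S', hS', hb⟩
      rcases eq_or_ne a j with rfl | ha
      · rw [h] at hS'
        have hSS : S' = S := by injection hS' with h'; exact h'.symm
        exact ⟨insert i S, hM'j, Finset.mem_insert_of_mem (hSS ▸ hb)⟩
      · exact ⟨S', by rw [hM'ne a ha]; exact hS', hb⟩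
    have e_case : ∀ a b, depEdge M' a b → depEdge M a b ∨ (a = j ∧ b = i) := by
      rintro a b ⟨S', hS', hb⟩
      rcases eq_or_ne a j with rfl | ha
      · rw [hM'j] at hS'
        have hSS : S' = insert i S := by injection hS' with h'; exact h'.symm
        rcases Finset.mem_insert.mp (hSS ▸ hb) with rfl | hb'
        · exact Or.inr ⟨rfl, rfl⟩
        · exact Or.inl ⟨S, h, hb'⟩
      · rw [hM'ne a ha] at hS'
        exact Or.inl ⟨S', hS', hb⟩
    have w_lift : ∀ (m : ℕ) (a b : Fin n), hasWalk (depEdge M) m a b →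
        hasWalk (depEdge M') m a b := by
      intro m
      induction m with
      | zero => intro a b hw; exact hw
      | succ m ih =>
        rintro a b ⟨c, he, hw⟩
        exact hasWalk_cons (e_lift a c he) (ih c b hw)
    have w_decomp : ∀ (m : ℕ) (a b : Fin n), hasWalk (depEdge M') m a b →
        hasWalk (depEdge M) m a b ∨
          ∃ m1 m2, hasWalk (depEdge M) m1 a j ∧ hasWalk (depEdge M') m2 i b ∧
            m = m1 + 1 + m2 := by
      intro m
      induction m with
      | zero => intro a b hw; exact Or.inl hw
      | succ m ih =>
        rintro a b ⟨c, he, hw⟩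
        rcases e_case a c he with he' | ⟨rfl, rfl⟩
        · rcases ih c b hw with h' | ⟨m1, m2, h1, h2, h3⟩
          · exact Or.inl (hasWalk_cons he' h')
          · exact Or.inr ⟨m1 + 1, m2, hasWalk_cons he' h1, h2, by omega⟩
        · exact Or.inr ⟨0, m, hasWalk_zero a, hw, by omega⟩
    have r_lift : ∀ a, reach0 M a → reach0 M' a := by
      rintro a ⟨m, w, hw, hn⟩
      exact ⟨m, w, w_lift m a w hw, const0' w hn⟩
    have hedge_ji : depEdge M' j i := ⟨insert i S, hM'j, Finset.mem_insert_self i S⟩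
    refine suff M' ?_
    intro v hv hcw
    obtain ⟨ℓ, hℓ1, hwℓ⟩ := hcw
    have hnrMv : ¬ reach0 M v := fun hr => hv (r_lift v hr)
    rcases w_decomp ℓ v v hwℓ with hMwalk | ⟨m1, m2, hvj, hiv, hlen⟩
    · obtain ⟨q, h1, h2⟩ := necc M hf v hnrMv ⟨ℓ, hℓ1, hMwalk⟩
      exact ⟨q, w_lift _ v v h1, w_lift _ v v h2⟩
    · -- closed walk through the new edge j → i
      have hbase : hasWalk (depEdge M') (m1 + 1) v i :=
        hasWalk_trans m1 1 v j i (w_lift m1 v j hvj) (hasWalk_single hedge_ji)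
      rcases hcond with hA | hB | hC
      · exfalso
        rcases w_decomp m2 i v hiv with h' | ⟨m1', m2', h1, _, _⟩
        · exact hA ⟨m2 + m1, hasWalk_trans m2 m1 i v j h' hvj⟩
        · exact hA ⟨m1', h1⟩
      · -- closed walk at i in M
        have hri : ¬ reach0 M i := by
          rintro ⟨m, w0, hw0, h0⟩
          exact hv ⟨(m1 + 1) + m, w0,
            hasWalk_trans (m1 + 1) m v i w0 hbase (w_lift m i w0 hw0), const0' w0 h0⟩
        obtain ⟨q, hq1, hq0⟩ := necc M hf i hri hB
        have wA : hasWalk (depEdge M') ((m1 + 1) + q + m2) v v :=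
          hasWalk_trans _ m2 v i v
            (hasWalk_trans (m1 + 1) q v i i hbase (w_lift q i i hq0)) hiv
        have wB : hasWalk (depEdge M') ((m1 + 1) + (q + 1) + m2) v v :=
          hasWalk_trans _ m2 v i v
            (hasWalk_trans (m1 + 1) (q + 1) v i i hbase (w_lift (q + 1) i i hq1)) hiv
        exact ⟨(m1 + 1) + q + m2, hasWalk_congr (by omega) wB, wA⟩
      · -- closed walk at j in M
        have hrj : ¬ reach0 M j := by
          rintro ⟨m, w0, hw0, h0⟩
          exact hv ⟨m1 + m, w0,
            hasWalk_trans m1 m v j w0 (w_lift m1 v j hvj) (w_lift m j w0 hw0), const0' w0 h0⟩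
        obtain ⟨q, hq1, hq0⟩ := necc M hf j hrj hC
        have wA : hasWalk (depEdge M') (m1 + q + 1 + m2) v v :=
          hasWalk_trans _ m2 v i v
            (hasWalk_trans _ 1 v j i
              (hasWalk_trans m1 q v j j (w_lift m1 v j hvj) (w_lift q j j hq0))
              (hasWalk_single hedge_ji)) hiv
        have wB : hasWalk (depEdge M') (m1 + (q + 1) + 1 + m2) v v :=
          hasWalk_trans _ m2 v i v
            (hasWalk_trans _ 1 v j i
              (hasWalk_trans m1 (q + 1) v j j (w_lift m1 v j hvj) (w_lift (q + 1) j j hq1))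
              (hasWalk_single hedge_ji)) hiv
        exact ⟨m1 + q + 1 + m2, hasWalk_congr (by omega) wB, wA⟩
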